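/- arXiv:1904.09395 — 2 statements merged into one kernel-verified Lean document; each statement's English description precedes it below -/
import Mathlib

section
/- For every integer n ≥ 1, (2/π) · (Γ(2 + n/2))^{2/n} < n/8.5 + 2, where Γ denotes the real Gamma function. -/
/-!
With `x = n / 2` the claim reads `log Γ(x + 2) < x log T` for `T = π (2x + 17) / 17 = (π/2)(n/8.5 + 2)`.
Stirling's bound `(k + 1)! ≤ e √(k + 1) ((k + 1)/e)^(k + 1)` gives
`log Γ(x + 2) ≤ (x + 1) log (x + 1) + log (x + 3/2) / 2 - x` for integral `x`, and for half-integral `x`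
through the log-convexity `Γ(x + 2)² ≤ Γ(x + 3/2) Γ(x + 5/2)` and AM-GM. Since `π e > 8.5397`, it then
suffices that `(3/2) log (x + 3/2) < x log (8.5397 (2x + 17) / (17 (x + 1)))` for `x ≥ 1`. This elementary
inequality has a margin of only about `0.2` near `x = 300`; it is proved on seven intervals, bounding the left
logarithm by a tangent line and the right one by the Padé bound `log u ≥ 2 (u - 1) / (u + 1)`.
For `n = 1` log-convexity alone suffices: `Γ(5/2)² ≤ Γ(2) Γ(3) = 2`.
-/

open Real Set
open scoped Nat

lemma log_le_log_add_div_sub_one {a y : ℝ} (ha : 0 < a) (hy : 0 < y) :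
    log y ≤ log a + y / a - 1 := by
  have := log_le_sub_one_of_pos (div_pos hy ha)
  rw [log_div hy.ne' ha.ne'] at this
  linarith

lemma two_mul_sub_div_add_le_log {u : ℝ} (hu : 1 ≤ u) : 2 * (u - 1) / (u + 1) ≤ log u := by
  rcases hu.eq_or_lt with rfl | hu
  · simp
  -- the first term of `log (1 + 1/a) = ∑ 2 / ((2k + 1) (2a + 1)^(2k + 1))` at `a = 1 / (u - 1)`
  have hsum := hasSum_log_one_add_inv (inv_pos.2 (sub_pos.2 hu))
  rw [inv_inv, add_sub_cancel] at hsum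
  refine le_trans (le_of_eq ?_) (le_hasSum hsum 0 fun k _ => by positivity)
  have hu1 : u - 1 ≠ 0 := (sub_pos.2 hu).ne'
  simp only [CharP.cast_eq_zero, mul_zero, zero_add, pow_one]
  field_simp
  ring

lemma log_add_two_mul_sub_div_add_le_log {b t : ℝ} (hb : 0 < b) (hbt : b ≤ t) :
    log b + 2 * (t - b) / (t + b) ≤ log t := by
  have h := two_mul_sub_div_add_le_log ((one_le_div hb).2 hbt)
  rw [log_div (hb.trans_le hbt).ne' hb.ne'] at h
  have : 2 * (t / b - 1) / (t / b + 1) = 2 * (t - b) / (t + b) := by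
    field_simp
  linarith

lemma log_factorial_succ_le (m : ℕ) : log ((m + 1)! : ℝ) ≤ (m + 3 / 2) * log (m + 1) - m := by
  -- the Stirling sequence `k! / (√(2k) (k/e)^k)` decreases from its value `e / √2` at `k = 1`
  have hanti := Stirling.log_stirlingSeq'_antitone (Nat.zero_le m)
  simp only [Function.comp_apply, Nat.succ_eq_add_one, zero_add, Stirling.stirlingSeq_one] at hanti
  rw [Stirling.log_stirlingSeq_formula, log_div (exp_pos 1).ne' (by positivity), log_exp,
    log_sqrt zero_le_two] at hanti
  have hm : (0 : ℝ) < m + 1 := by positivity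
  push_cast at hanti
  rw [log_mul two_ne_zero hm.ne', log_div hm.ne' (exp_pos 1).ne', log_exp] at hanti
  linarith

lemma two_mul_log_Gamma_add_half_le {x : ℝ} (hx : 0 < x) :
    2 * log (Gamma (x + 1 / 2)) ≤ log (Gamma x) + log (Gamma (x + 1)) := by
  have h := convexOn_log_Gamma.2 (mem_Ioi.2 hx) (mem_Ioi.2 (by linarith : (0 : ℝ) < x + 1))
    (by norm_num : (0 : ℝ) ≤ 1 / 2) (by norm_num : (0 : ℝ) ≤ 1 / 2) (by norm_num)
  simp only [smul_eq_mul, Function.comp_apply] at h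
  rw [show 1 / 2 * x + 1 / 2 * (x + 1) = x + 1 / 2 by ring] at h
  linarith

lemma pi_mul_exp_one_gt : (85397 / 10000 : ℝ) < π * exp 1 := by
  nlinarith [pi_gt_d6, exp_one_gt_d9, pi_pos]

lemma mul_log_lt_mul_log_div_of_poly {c x y p q a b la lb : ℝ} (hc : 0 ≤ c) (hx : 0 ≤ x)
    (hy : 0 < y) (hq : 0 < q) (ha : 0 < a) (hb : 0 < b) (hbq : b * q ≤ p)
    (hla : log a ≤ la) (hlb : lb ≤ log b)
    (hpoly : c * (a * la + y - a) * (p + b * q) < a * x * (lb * (p + b * q) + 2 * (p - b * q))) :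
    c * log y < x * log (p / q) := by
  have hbt : b ≤ p / q := (le_div_iff₀ hq).2 hbq
  have hD : 0 < p + b * q := by nlinarith
  have hupper : log y ≤ (a * la + y - a) / a := by
    have := log_le_log_add_div_sub_one ha hy
    rw [show (a * la + y - a) / a = la + y / a - 1 by field_simp]
    linarith
  have hlower : (lb * (p + b * q) + 2 * (p - b * q)) / (p + b * q) ≤ log (p / q) := by
    have := log_add_two_mul_sub_div_add_le_log hb hbt
    rw [show 2 * (p / q - b) / (p / q + b) = 2 * (p - b * q) / (p + b * q) by field_simp] at this
    rw [add_div, mul_div_cancel_right₀ _ hD.ne']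
    linarith
  calc c * log y ≤ c * ((a * la + y - a) / a) := by gcongr
    _ < x * ((lb * (p + b * q) + 2 * (p - b * q)) / (p + b * q)) := by
        rw [mul_div_assoc', mul_div_assoc', div_lt_div_iff₀ ha hD]
        linarith
    _ ≤ x * log (p / q) := by gcongr

lemma three_halves_mul_log_lt {x : ℝ} (hx : 1 ≤ x) :
    3 / 2 * log (x + 3 / 2) < x * log (85397 / 10000 * (2 * x + 17) / (17 * (x + 1))) := by
  have hlog_two_pow (j : ℕ) : log (2 ^ j) ≤ j * 0.6931471808 := by
    rw [log_pow]
    exact mul_le_mul_of_nonneg_left log_two_lt_d9.le j.cast_nonneg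
  have piece (j : ℕ) (b lb : ℝ) (hb : 0 < b) (hlb : lb ≤ log b)
      (hbq : b * (17 * (x + 1)) ≤ 85397 / 10000 * (2 * x + 17))
      (hpoly : 3 / 2 * (2 ^ j * (j * 0.6931471808) + (x + 3 / 2) - 2 ^ j) *
        (85397 / 10000 * (2 * x + 17) + b * (17 * (x + 1))) < 2 ^ j * x *
        (lb * (85397 / 10000 * (2 * x + 17) + b * (17 * (x + 1))) +
          2 * (85397 / 10000 * (2 * x + 17) - b * (17 * (x + 1))))) :
      3 / 2 * log (x + 3 / 2) < x * log (85397 / 10000 * (2 * x + 17) / (17 * (x + 1))) :=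
    mul_log_lt_mul_log_div_of_poly (by norm_num) (by linarith) (by linarith) (by linarith)
      (by positivity) hb hbq (hlog_two_pow j) hlb hpoly
  -- On each interval `[x₀, x₁]` below: tangent to `log` at `2^j`, Padé bound at `b ∈ {1, 2}`, and the
  -- remaining quadratic inequality in `x` follows from `(x - x₀) (x₁ - x) ≥ 0` (`(x - x₀)² ≥ 0` on the
  -- unbounded last one).
  have hlog2 : (0.6931471803 : ℝ) ≤ log 2 := log_two_gt_d9.le
  have hlog1 : (0 : ℝ) ≤ log 1 := log_one.ge
  rcases le_or_gt x 2 with h₁ | h₁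
  · exact piece 1 2 _ two_pos hlog2 (by linarith) <| by
      norm_num; nlinarith [mul_nonneg (sub_nonneg.2 hx) (sub_nonneg.2 h₁)]
  rcases le_or_gt x 6 with h₂ | h₂
  · exact piece 2 2 _ two_pos hlog2 (by linarith) <| by
      norm_num; nlinarith [mul_nonneg (sub_nonneg.2 h₁.le) (sub_nonneg.2 h₂)]
  rcases le_or_gt x 20 with h₃ | h₃
  · exact piece 4 1 _ one_pos hlog1 (by linarith) <| by
      norm_num; nlinarith [mul_nonneg (sub_nonneg.2 h₂.le) (sub_nonneg.2 h₃)]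
  rcases le_or_gt x 100 with h₄ | h₄
  · exact piece 6 1 _ one_pos hlog1 (by linarith) <| by
      norm_num; nlinarith [mul_nonneg (sub_nonneg.2 h₃.le) (sub_nonneg.2 h₄)]
  rcases le_or_gt x 150 with h₅ | h₅
  · exact piece 7 1 _ one_pos hlog1 (by linarith) <| by
      norm_num; nlinarith [mul_nonneg (sub_nonneg.2 h₄.le) (sub_nonneg.2 h₅)]
  rcases le_or_gt x 400 with h₆ | h₆
  · exact piece 8 1 _ one_pos hlog1 (by linarith) <| by
      norm_num; nlinarith [mul_nonneg (sub_nonneg.2 h₅.le) (sub_nonneg.2 h₆)]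
  · exact piece 9 1 _ one_pos hlog1 (by linarith) <| by
      norm_num; nlinarith [mul_nonneg (sub_nonneg.2 h₆.le) (sub_nonneg.2 h₆.le)]

lemma add_one_mul_log_add_half_log_sub_lt {x : ℝ} (hx : 1 ≤ x) :
    (x + 1) * log (x + 1) + log (x + 3 / 2) / 2 - x < x * log (π * (2 * x + 17) / 17) := by
  have hx1 : 0 < x + 1 := by linarith
  have hT : 0 < π * (2 * x + 17) / 17 := by positivity
  have hkey := three_halves_mul_log_lt hx
  have hconst : log (85397 / 10000 * (2 * x + 17) / (17 * (x + 1))) ≤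
      log (π * (2 * x + 17) / 17) + 1 - log (x + 1) := by
    calc log (85397 / 10000 * (2 * x + 17) / (17 * (x + 1)))
        ≤ log (π * exp 1 * (2 * x + 17) / (17 * (x + 1))) := by
          gcongr
          exact pi_mul_exp_one_gt.le
      _ = log (π * (2 * x + 17) / 17 * exp 1 / (x + 1)) := by
          congr 1
          field_simp
      _ = log (π * (2 * x + 17) / 17) + 1 - log (x + 1) := by
          rw [log_div (by positivity) hx1.ne', log_mul hT.ne' (exp_pos 1).ne', log_exp]
  have hmono : log (x + 1) ≤ log (x + 3 / 2) := log_le_log hx1 (by linarith)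
  have hx0 : 0 ≤ x := by linarith
  nlinarith [mul_le_mul_of_nonneg_left hconst hx0]

lemma log_Gamma_nat_add_two_le (m : ℕ) :
    log (Gamma (m + 2)) ≤ (m + 1) * log (m + 1) + log (m + 3 / 2) / 2 - m := by
  have hG : Gamma (m + 2) = (m + 1)! := by
    rw [← Gamma_nat_eq_factorial]; push_cast; ring_nf
  rw [hG]
  have := log_factorial_succ_le m
  have : log (m + 1 : ℝ) ≤ log (m + 3 / 2) := log_le_log (by positivity) (by linarith)
  linarith

lemma log_Gamma_nat_add_half_add_two_le (m : ℕ) :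
    log (Gamma (m + 1 / 2 + 2)) ≤
      (m + 1 / 2 + 1) * log (m + 1 / 2 + 1) + log (m + 1 / 2 + 3 / 2) / 2 - (m + 1 / 2) := by
  have hconv := two_mul_log_Gamma_add_half_le (by positivity : (0 : ℝ) < m + 2)
  have h1 : Gamma (m + 2) = (m + 1)! := by
    rw [← Gamma_nat_eq_factorial]; push_cast; ring_nf
  have h2 : Gamma (m + 2 + 1) = (m + 1 + 1)! := by
    rw [← Gamma_nat_eq_factorial]; push_cast; ring_nf
  have hf1 := log_factorial_succ_le m
  have hf2 := log_factorial_succ_le (m + 1)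
  push_cast at hf2
  rw [show (m : ℝ) + 1 / 2 + 3 / 2 = m + 1 + 1 by ring]
  have hamgm : log (m + 1 : ℝ) + log (m + 1 + 1) ≤ 2 * log (m + 1 / 2 + 1) := by
    rw [← log_mul (by positivity) (by positivity), ← log_rpow (by positivity)]
    exact log_le_log (by positivity) (by norm_num; nlinarith)
  rw [h1, h2, show (m : ℝ) + 2 + 1 / 2 = m + 1 / 2 + 2 by ring] at hconv
  have hm : (0 : ℝ) ≤ m + 3 / 2 := by positivity
  nlinarith [mul_le_mul_of_nonneg_left hamgm hm]

lemma log_Gamma_two_add_half_nat_lt (n : ℕ) (hn : 1 ≤ n) :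
    log (Gamma (2 + n / 2)) < n / 2 * log (π * (n + 17) / 17) := by
  rw [add_comm, show (n : ℝ) + 17 = 2 * (n / 2) + 17 by ring]
  obtain ⟨m, rfl | rfl⟩ := n.even_or_odd'
  · rw [show ((2 * m : ℕ) : ℝ) / 2 = m by push_cast; ring]
    have hm : (1 : ℝ) ≤ m := by exact_mod_cast (by omega : 1 ≤ m)
    exact (log_Gamma_nat_add_two_le m).trans_lt (add_one_mul_log_add_half_log_sub_lt hm)
  rw [show ((2 * m + 1 : ℕ) : ℝ) / 2 = m + 1 / 2 by push_cast; ring]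
  rcases Nat.eq_zero_or_pos m with rfl | hm
  · have hconv := two_mul_log_Gamma_add_half_le two_pos
    rw [Gamma_two, log_one, show (2 : ℝ) + 1 = (2 : ℕ) + 1 by norm_num,
      Gamma_nat_eq_factorial] at hconv
    have : log 2 < log (π * 18 / 17) := log_lt_log two_pos (by nlinarith [pi_gt_three])
    norm_num at hconv ⊢
    linarith
  · have hm : (1 : ℝ) ≤ m + 1 / 2 := by
      have : (1 : ℝ) ≤ m := by exact_mod_cast hm
      linarith
    exact (log_Gamma_nat_add_half_add_two_le m).trans_lt (add_one_mul_log_add_half_log_sub_lt hm)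

theorem blichfeldt_bound_lt_linear (n : ℕ) (hn : 1 ≤ n) :
    (2 / π) * (Real.Gamma (2 + (n : ℝ) / 2)) ^ (2 / (n : ℝ)) < (n : ℝ) / 8.5 + 2 := by
  have hn0 : (0 : ℝ) < n := by exact_mod_cast hn
  have hT : 0 < π * (n + 17) / 17 := by positivity
  have hlog := log_Gamma_two_add_half_nat_lt n hn
  have hpow : Gamma (2 + n / 2) ^ (2 / (n : ℝ)) < π * (n + 17) / 17 := by
    rw [rpow_def_of_pos (Gamma_pos_of_pos (by positivity)), ← exp_log hT]
    refine exp_lt_exp.2 ?_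
    calc log (Gamma (2 + n / 2)) * (2 / n) < n / 2 * log (π * (n + 17) / 17) * (2 / n) := by
          gcongr
      _ = log (π * (n + 17) / 17) := by field_simp
  calc (2 / π) * Gamma (2 + n / 2) ^ (2 / (n : ℝ)) < (2 / π) * (π * (n + 17) / 17) := by
        gcongr
    _ = n / 8.5 + 2 := by field_simp; norm_num; ring
end

section
/- For every integer n ≥ 109, ∫_{107.5}^{n−0.5} (1/t)·ln(1 + 18/t) dt ≤ (9/8)·ln(119.5/107.5) + 9/215. -/
/-!
For `x ≥ 0` the Padé-type bound `log (1 + x) ≤ x (x + 6) / (4 x + 6)` holds, since the difference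
vanishes at `0` and has derivative `4 x³ / ((4 x + 6)² (1 + x)) ≥ 0`. With `x = c / t` it bounds
`log (1 + c / t) / t` by a rational function with the explicit primitive
`(9/8) (log t - log (3 t + 2 c)) - c / (4 t)`. For `a = 107.5`, `c = 18` the resulting bound on the
integral over `[a, b]` increases with `b` towards `(9/8) log (119.5 / 107.5) + 9 / 215`.
-/

open Real

theorem log_one_add_le_pade {x : ℝ} (hx : 0 ≤ x) :
    log (1 + x) ≤ x * (x + 6) / (4 * x + 6) := by
  let F : ℝ → ℝ := fun y ↦ y * (y + 6) / (4 * y + 6) - log (1 + y)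
  have hF : ∀ y ∈ Set.Ici (0 : ℝ),
      HasDerivAt F (4 * y ^ 3 / ((4 * y + 6) ^ 2 * (1 + y))) y := by
    intro y (hy : 0 ≤ y)
    have hpade := (((hasDerivAt_id y).mul ((hasDerivAt_id y).add_const 6)).div
      (((hasDerivAt_id y).const_mul 4).add_const 6) (by positivity))
    have hlog := ((hasDerivAt_id y).const_add 1).log (by positivity)
    refine (hpade.sub hlog).congr_deriv ?_
    simp only [Pi.mul_apply, id]
    field_simp
    ring
  have hmono : MonotoneOn F (Set.Ici 0) :=
    monotoneOn_of_hasDerivWithinAt_nonneg (convex_Ici 0)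
      (fun y hy ↦ (hF y hy).continuousAt.continuousWithinAt)
      (fun y hy ↦ (hF y (interior_subset hy)).hasDerivWithinAt)
      (fun y hy ↦ by
        have : 0 ≤ y := interior_subset hy
        positivity)
  have := hmono Set.self_mem_Ici hx hx
  simp only [F] at this
  norm_num at this
  linarith

noncomputable def padePrimitive (c t : ℝ) : ℝ :=
  9 / 8 * (log t - log (3 * t + 2 * c)) - c / (4 * t)

theorem hasDerivAt_padePrimitive {c t : ℝ} (hc : 0 ≤ c) (ht : 0 < t) :
    HasDerivAt (padePrimitive c) (1 / t * (c / t * (c / t + 6) / (4 * (c / t) + 6))) t := by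
  have h3 : 0 < 3 * t + 2 * c := by positivity
  have hlog := (hasDerivAt_log ht.ne').sub
    ((((hasDerivAt_id' t).const_mul 3).add_const (2 * c)).log h3.ne')
  have hrecip := (hasDerivAt_const t c).div ((hasDerivAt_id' t).const_mul 4) (by positivity)
  refine ((hlog.const_mul (9 / 8)).sub hrecip).congr_deriv ?_
  field_simp
  ring

theorem inv_mul_log_one_add_div_le {c t : ℝ} (hc : 0 ≤ c) (ht : 0 < t) :
    1 / t * log (1 + c / t) ≤ 1 / t * (c / t * (c / t + 6) / (4 * (c / t) + 6)) :=
  mul_le_mul_of_nonneg_left (log_one_add_le_pade (by positivity)) (by positivity)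

theorem integral_inv_mul_log_one_add_div_le {a b c : ℝ} (ha : 0 < a) (hab : a ≤ b) (hc : 0 ≤ c) :
    ∫ t in a..b, 1 / t * log (1 + c / t) ≤
      9 / 8 * log (b * (3 * a + 2 * c) / (a * (3 * b + 2 * c))) + c * (b - a) / (4 * a * b) := by
  have hpos : ∀ t ∈ Set.Icc a b, 0 < t := fun t ht ↦ ha.trans_le ht.1
  have hpos' : ∀ t ∈ Set.Ioo a b, 0 < t := fun t ht ↦ ha.trans ht.1
  have hb : 0 < b := ha.trans_le hab
  have hcont : ContinuousOn (fun t ↦ 1 / t * log (1 + c / t)) (Set.Icc a b) := fun t ht ↦ by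
    have := hpos t ht
    have : 1 + c / t ≠ 0 := by positivity
    exact ContinuousAt.continuousWithinAt (by fun_prop (disch := positivity))
  calc ∫ t in a..b, 1 / t * log (1 + c / t)
      ≤ padePrimitive c b - padePrimitive c a :=
        intervalIntegral.integral_le_sub_of_hasDeriv_right_of_le hab
          (fun t ht ↦ (hasDerivAt_padePrimitive hc (hpos t ht)).continuousAt.continuousWithinAt)
          (fun t ht ↦ (hasDerivAt_padePrimitive hc (hpos' t ht)).hasDerivWithinAt)
          hcont.integrableOn_Icc
          (fun t ht ↦ inv_mul_log_one_add_div_le hc (hpos' t ht))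
    _ = 9 / 8 * log (b * (3 * a + 2 * c) / (a * (3 * b + 2 * c))) + c * (b - a) / (4 * a * b) := by
        have h3a : 0 < 3 * a + 2 * c := by positivity
        have h3b : 0 < 3 * b + 2 * c := by positivity
        rw [log_div (by positivity) (by positivity), log_mul hb.ne' h3a.ne',
          log_mul ha.ne' h3b.ne', padePrimitive, padePrimitive]
        field_simp
        ring

theorem integral_bound_11 (n : ℕ) (hn : 109 ≤ n) :
    ∫ t in (107.5 : ℝ)..((n : ℝ) - 0.5), (1 / t) * Real.log (1 + 18 / t) ≤
      (9 / 8) * Real.log (119.5 / 107.5) + 9 / 215 := by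
  set b : ℝ := (n : ℝ) - 0.5
  have hab : (107.5 : ℝ) ≤ b := by
    have : (109 : ℝ) ≤ n := by exact_mod_cast hn
    norm_num [b]
    linarith
  have hlog : log (b * (3 * 107.5 + 2 * 18) / (107.5 * (3 * b + 2 * 18))) ≤ log (119.5 / 107.5) :=
    log_le_log (by positivity) (by rw [div_le_div_iff₀ (by positivity) (by positivity)]; nlinarith)
  have htail : 18 * (b - 107.5) / (4 * 107.5 * b) ≤ 9 / 215 := by
    rw [div_le_div_iff₀ (by positivity) (by positivity)]; nlinarith
  calc ∫ t in (107.5 : ℝ)..b, 1 / t * log (1 + 18 / t)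
      ≤ 9 / 8 * log (b * (3 * 107.5 + 2 * 18) / (107.5 * (3 * b + 2 * 18)))
          + 18 * (b - 107.5) / (4 * 107.5 * b) :=
        integral_inv_mul_log_one_add_div_le (by norm_num) hab (by norm_num)
    _ ≤ 9 / 8 * log (119.5 / 107.5) + 9 / 215 := by linarith
end
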